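/- arXiv:2301.07413 — 6 statements merged into one kernel-verified Lean document; each statement's English description precedes it below -/
import Mathlib

section
/- If 𝒜 is a T₀-family, then every uncountable subset of ω₁ contains a two-element subset belonging to 𝒜. -/
/-!
An uncountable `S ⊆ ω₁` has cardinality `ℵ₁ = ℵ₁ · 2`, so it contains `ω₁` pairwise disjoint
pairs `{a ξ, b ξ}`. Applying the T-family property to these pairs with `k = 2` gives `ξ ≠ η`
with `{a ξ, a η} ∈ 𝒜`, a two-element subset of `S`.
-/

noncomputable section

/-- The set `ω₁` of countable ordinals, as a type. -/
abbrev Omega1 : Type := (Ordinal.omega 1).ToType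

/-- `‖x‖_𝒜 = sup_{A ∈ 𝒜} sqrt (Σ_{α ∈ A} x(α)²)`. -/
def normA (𝒜 : Set (Finset Omega1)) (x : Omega1 → ℝ) : ℝ :=
  sSup {r : ℝ | ∃ A ∈ 𝒜, r = Real.sqrt (∑ α ∈ A, (x α) ^ 2)}

/-- The supremum norm of `x`. -/
def supNorm (x : Omega1 → ℝ) : ℝ :=
  sSup {r : ℝ | ∃ α : Omega1, r = |x α|}

/-- The ℓ₂ norm of a (finitely supported) `x`. -/
def l2Norm (x : Omega1 → ℝ) : ℝ :=
  Real.sqrt (∑ᶠ α : Omega1, (x α) ^ 2)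

/-- `𝒜` is a family of finite subsets of `ω₁` closed under subsets
and containing all singletons. -/
def IsGoodFamily (𝒜 : Set (Finset Omega1)) : Prop :=
  (∀ A ∈ 𝒜, ∀ B : Finset Omega1, B ⊆ A → B ∈ 𝒜) ∧
    ∀ α : Omega1, ({α} : Finset Omega1) ∈ 𝒜

/-- `{{a ξ, b ξ} : ξ < ω₁}` is an (uncountable) family of pairwise disjoint pairs. -/
def PairwiseDisjointPairs (a b : Omega1 → Omega1) : Prop :=
  (∀ ξ : Omega1, a ξ ≠ b ξ) ∧
    ∀ ξ η : Omega1, ξ ≠ η →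
      ({a ξ, b ξ} : Set Omega1) ∩ ({a η, b η} : Set Omega1) = ∅

/-- `𝒜, ℬ` are T-families. -/
def IsTFamilies (𝒜 ℬ : Set (Finset Omega1)) : Prop :=
  (∀ A ∈ 𝒜, ∀ B : Finset Omega1, B ⊆ A → B ∈ 𝒜) ∧
  (∀ A ∈ ℬ, ∀ B : Finset Omega1, B ⊆ A → B ∈ ℬ) ∧
  (∀ α : Omega1, ∃ A ∈ 𝒜, α ∈ A) ∧
  (∀ A ∈ 𝒜 ∩ ℬ, A.card ≤ 1) ∧
  (∀ a b : Omega1 → Omega1, PairwiseDisjointPairs a b → ∀ k : ℕ,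
    ∃ s : Finset Omega1, s.card = k ∧
      (s.image a ∈ 𝒜) ∧ (s.image b ∈ ℬ) ∧
      Set.InjOn a ↑s ∧ Set.InjOn b ↑s)

/-- `𝒜` is a T₀-family: it is part of a pair of T-families. -/
def IsT0Family (𝒜 : Set (Finset Omega1)) : Prop :=
  ∃ ℬ : Set (Finset Omega1), IsTFamilies 𝒜 ℬ

open Cardinal Function

theorem mk_omega1 : #Omega1 = ℵ₁ := by
  rw [mk_toType, Ordinal.card_omega]

theorem nonempty_embedding_prod_bool_of_not_countable {S : Set Omega1} (hS : ¬ S.Countable) :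
    Nonempty (Omega1 × Bool ↪ S) := by
  have hS₁ : ℵ₁ ≤ #S := aleph_one_le_iff.mpr (lt_of_not_ge (mt le_aleph0_iff_set_countable.mp hS))
  refine le_def _ _ |>.mp ?_
  rw [mk_prod, lift_id, lift_id, mk_bool, mk_omega1,
    mul_eq_left (aleph0_le_aleph 1) (ofNat_le_aleph0.trans (aleph0_le_aleph 1)) two_ne_zero]
  exact hS₁

theorem pairwiseDisjointPairs_of_injective {f : Omega1 × Bool → Omega1} (hf : Injective f) :
    PairwiseDisjointPairs (fun ξ => f (ξ, false)) (fun ξ => f (ξ, true)) := by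
  refine ⟨fun ξ h => Bool.false_ne_true (congrArg Prod.snd (hf h)), fun ξ η hne => ?_⟩
  ext x
  simp only [Set.mem_inter_iff, Set.mem_insert_iff, Set.mem_singleton_iff,
    Set.mem_empty_iff_false, iff_false, not_and]
  rintro (h₁ | h₁) (h₂ | h₂) <;> exact hne (congrArg Prod.fst (hf (h₁.symm.trans h₂)))

theorem IsTFamilies.exists_pair_mem_left {𝒜 ℬ : Set (Finset Omega1)} (h : IsTFamilies 𝒜 ℬ)
    {a b : Omega1 → Omega1} (hab : PairwiseDisjointPairs a b) :
    ∃ ξ η, a ξ ≠ a η ∧ ({a ξ, a η} : Finset Omega1) ∈ 𝒜 := by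
  obtain ⟨s, hcard, hs𝒜, -, hinj, -⟩ := h.2.2.2.2 a b hab 2
  obtain ⟨ξ, η, hξη, rfl⟩ := Finset.card_eq_two.mp hcard
  refine ⟨ξ, η, fun heq => hξη (hinj (by simp) (by simp) heq), ?_⟩
  simpa [Finset.image_insert] using hs𝒜

/-- if `𝒜` is a T₀-family then every uncountable subset of `ω₁`
contains a two-element subset belonging to `𝒜`. -/
theorem stmt6 (𝒜 : Set (Finset Omega1)) (h𝒜 : IsT0Family 𝒜)
    (S : Set Omega1) (hS : ¬ S.Countable) :
    ∃ α ∈ S, ∃ β ∈ S, α ≠ β ∧ ({α, β} : Finset Omega1) ∈ 𝒜 := by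
  obtain ⟨ℬ, hT⟩ := h𝒜
  obtain ⟨f⟩ := nonempty_embedding_prod_bool_of_not_countable hS
  have hf : Injective fun p => (f p : Omega1) := Subtype.val_injective.comp f.injective
  obtain ⟨ξ, η, hne, hmem⟩ := hT.exists_pair_mem_left (pairwiseDisjointPairs_of_injective hf)
  exact ⟨_, (f (ξ, false)).2, _, (f (η, false)).2, hne, hmem⟩
end
end

section
/- Let 𝒜 be a T₀-family. Suppose (A_α)_{α<ω₁} is a transfinite sequence of nonempty countable subsets of ω₁ such that each A_α is maximal with the property that every finite subset of A_α in 𝒜 is a singleton or empty, and the A_α are separated (sup A_α < min A_β for α < β). For each α choose x_α supported exactly on A_α with x_α(min A_α) = 1 and |x_α(γ)| ≤ 1 for all γ. Then ‖x_α‖_𝒜 = 1 for all α, and ‖x_α − x_β‖_𝒜 > 1 for all α < β < ω₁; hence the unit sphere of the SW-space X_𝒜 admits an uncountable (1+)-separated set. -/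
noncomputable section

/-!
On `A_α` the family `𝒜` sees only singletons, so every sum `∑_{γ ∈ B} x_α(γ)²` with `B ∈ 𝒜`
has at most one nonzero term and is at most `1`, while `B = {min A_α}` attains `1`.
For `α < β`, the point `ξ = min A_β` lies outside `A_α` and above every earlier `A_δ`, so the
maximality of `A_α` yields `s ∈ 𝒜` inside `A_α ∪ {ξ}` with at least two points. By freeness of
`A_α`, `s` contains `ξ` and some `γ ∈ A_α`; then `(x_α - x_β)(ξ) = -1` and
`(x_α - x_β)(γ) = x_α(γ) ≠ 0`, so the sum over `s` of `(x_α - x_β)²` exceeds `1`.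
-/

open Finset

namespace IsT0Family

variable {𝒜 : Set (Finset Omega1)}

theorem mem_of_subset (h𝒜 : IsT0Family 𝒜) {A B : Finset Omega1} (hA : A ∈ 𝒜) (hBA : B ⊆ A) :
    B ∈ 𝒜 :=
  h𝒜.choose_spec.1 A hA B hBA

theorem singleton_mem (h𝒜 : IsT0Family 𝒜) (γ : Omega1) : ({γ} : Finset Omega1) ∈ 𝒜 := by
  obtain ⟨A, hA, hγA⟩ := h𝒜.choose_spec.2.2.1 γ
  exact h𝒜.mem_of_subset hA (singleton_subset_iff.2 hγA)

end IsT0Family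

section FreeSets

variable {ι : Type*} {𝒜 : Set (Finset ι)} {S : Set ι}

theorem sum_sq_le_one_of_free
    (hher : ∀ A ∈ 𝒜, ∀ B : Finset ι, B ⊆ A → B ∈ 𝒜)
    (hfree : ∀ s : Finset ι, ↑s ⊆ S → s ∈ 𝒜 → s.card ≤ 1)
    {x : ι → ℝ} (hsupp : Function.support x ⊆ S) (hx : ∀ γ, |x γ| ≤ 1)
    {B : Finset ι} (hB : B ∈ 𝒜) : ∑ γ ∈ B, x γ ^ 2 ≤ 1 := by
  classical
  have hcard : (B.filter (· ∈ S)).card ≤ 1 :=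
    hfree _ (fun γ hγ => (mem_filter.1 hγ).2) (hher B hB _ (filter_subset _ _))
  calc ∑ γ ∈ B, x γ ^ 2
      = ∑ γ ∈ B.filter (· ∈ S), x γ ^ 2 := by
        refine (sum_filter_of_ne fun γ _ hγ => hsupp ?_).symm
        exact Function.mem_support.2 fun h => hγ (by simp [h])
    _ ≤ ∑ _γ ∈ B.filter (· ∈ S), (1 : ℝ) :=
        sum_le_sum fun γ _ => (sq_le_one_iff_abs_le_one _).2 (hx γ)
    _ ≤ 1 := by simpa using hcard

theorem mem_and_exists_ne_mem_of_two_le_card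
    (hfree : ∀ s : Finset ι, ↑s ⊆ S → s ∈ 𝒜 → s.card ≤ 1)
    {ξ : ι} {s : Finset ι} (hsub : ↑s ⊆ S ∪ {ξ}) (hs : s ∈ 𝒜) (hcard : 2 ≤ s.card) :
    ξ ∈ s ∧ ∃ γ ∈ s, γ ≠ ξ ∧ γ ∈ S := by
  obtain ⟨γ, hγs, hγξ⟩ := exists_mem_ne (by omega : 1 < s.card) ξ
  refine ⟨?_, γ, hγs, hγξ, (hsub hγs).resolve_right hγξ⟩
  by_contra hξ
  have hsS : ↑s ⊆ S := fun δ hδ =>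
    (hsub hδ).resolve_right fun h => hξ (Set.mem_singleton_iff.1 h ▸ hδ)
  have := hfree s hsS hs
  omega

end FreeSets

theorem sum_sq_sub_le_four {ι : Type*} {B : Finset ι} {a b : ι → ℝ}
    (ha : ∑ i ∈ B, a i ^ 2 ≤ 1) (hb : ∑ i ∈ B, b i ^ 2 ≤ 1) :
    ∑ i ∈ B, (a - b) i ^ 2 ≤ 4 :=
  calc ∑ i ∈ B, (a - b) i ^ 2
      ≤ ∑ i ∈ B, (2 * a i ^ 2 + 2 * b i ^ 2) :=
        sum_le_sum fun i _ => by
          simp only [Pi.sub_apply]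
          nlinarith [sq_nonneg (a i + b i)]
    _ = 2 * ∑ i ∈ B, a i ^ 2 + 2 * ∑ i ∈ B, b i ^ 2 := by
        rw [sum_add_distrib, mul_sum, mul_sum]
    _ ≤ 4 := by linarith

section NormA

variable {𝒜 : Set (Finset Omega1)} {x : Omega1 → ℝ}

theorem normA_le_of_sum_sq_le {c : ℝ} (hc : 0 ≤ c) (h : ∀ B ∈ 𝒜, ∑ γ ∈ B, x γ ^ 2 ≤ c ^ 2) :
    normA 𝒜 x ≤ c := by
  refine Real.sSup_le ?_ hc
  rintro r ⟨B, hB, rfl⟩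
  exact (Real.sqrt_le_left hc).2 (h B hB)

theorem sqrt_sum_sq_le_normA {C : ℝ} (h : ∀ B ∈ 𝒜, ∑ γ ∈ B, x γ ^ 2 ≤ C)
    {B : Finset Omega1} (hB : B ∈ 𝒜) : Real.sqrt (∑ γ ∈ B, x γ ^ 2) ≤ normA 𝒜 x := by
  refine le_csSup ⟨Real.sqrt C, ?_⟩ ⟨B, hB, rfl⟩
  rintro r ⟨B', hB', rfl⟩
  exact Real.sqrt_le_sqrt (h B' hB')

theorem one_lt_normA_of_mem_of_mem {C : ℝ} (h : ∀ B ∈ 𝒜, ∑ γ ∈ B, x γ ^ 2 ≤ C)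
    {s : Finset Omega1} (hs : s ∈ 𝒜) {ξ γ : Omega1} (hξs : ξ ∈ s) (hγs : γ ∈ s) (hγξ : γ ≠ ξ)
    (hξ : |x ξ| = 1) (hγ : x γ ≠ 0) : 1 < normA 𝒜 x := by
  have hpair : ({ξ, γ} : Finset Omega1) ⊆ s := insert_subset hξs (singleton_subset_iff.2 hγs)
  have hlt : 1 < ∑ δ ∈ s, x δ ^ 2 :=
    calc 1 < x ξ ^ 2 + x γ ^ 2 := by rw [← sq_abs (x ξ), hξ]; linarith [sq_pos_of_ne_zero hγ]
      _ = ∑ δ ∈ {ξ, γ}, x δ ^ 2 := by rw [sum_pair hγξ.symm]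
      _ ≤ ∑ δ ∈ s, x δ ^ 2 := sum_le_sum_of_subset_of_nonneg hpair fun _ _ _ => sq_nonneg _
  calc 1 < √(∑ δ ∈ s, x δ ^ 2) := (Real.lt_sqrt zero_le_one).2 (by simpa using hlt)
    _ ≤ normA 𝒜 x := sqrt_sum_sq_le_normA h hs

end NormA

theorem stmt7_general (𝒜 : Set (Finset Omega1)) (h𝒜 : IsT0Family 𝒜)
    (A : Omega1 → Set Omega1)
    (hsep : ∀ α β : Omega1, α < β → ∀ x ∈ A α, ∀ y ∈ A β, x < y)
    (hfree : ∀ α, ∀ s : Finset Omega1, ↑s ⊆ A α → s ∈ 𝒜 → s.card ≤ 1)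
    (hmax : ∀ α, ∀ ξ : Omega1, ξ ∉ A α → (∀ β, β < α → ∀ y ∈ A β, y < ξ) →
      ∃ s : Finset Omega1, ↑s ⊆ A α ∪ {ξ} ∧ s ∈ 𝒜 ∧ 2 ≤ s.card)
    (x : Omega1 → Omega1 → ℝ)
    (hsupp : ∀ α, Function.support (x α) = A α)
    (m : Omega1 → Omega1)
    (hm : ∀ α, m α ∈ A α ∧ ∀ y ∈ A α, m α ≤ y)
    (hx1 : ∀ α, x α (m α) = 1)
    (hxb : ∀ α γ, |x α γ| ≤ 1) :
    (∀ α, normA 𝒜 (x α) = 1) ∧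
      ∀ α β : Omega1, α < β → 1 < normA 𝒜 (x α - x β) := by
  have hsum (α : Omega1) : ∀ B ∈ 𝒜, ∑ γ ∈ B, x α γ ^ 2 ≤ 1 := fun B hB =>
    sum_sq_le_one_of_free (fun _ hA _ hBA => h𝒜.mem_of_subset hA hBA) (hfree α)
      (hsupp α).le (hxb α) hB
  refine ⟨fun α => le_antisymm (normA_le_of_sum_sq_le zero_le_one (by simpa using hsum α)) ?_,
    fun α β hαβ => ?_⟩
  · simpa [hx1 α] using sqrt_sum_sq_le_normA (hsum α) (h𝒜.singleton_mem (m α))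
  have hdisj {γ : Omega1} (hγα : γ ∈ A α) (hγβ : γ ∈ A β) : False :=
    lt_irrefl γ (hsep α β hαβ γ hγα γ hγβ)
  have hξβ : m β ∈ A β := (hm β).1
  obtain ⟨s, hsub, hs, hcard⟩ := hmax α (m β) (hdisj · hξβ)
    fun δ hδ y hy => hsep δ β (hδ.trans hαβ) y hy (m β) hξβ
  obtain ⟨hξs, γ, hγs, hγξ, hγα⟩ := mem_and_exists_ne_mem_of_two_le_card (hfree α) hsub hs hcard
  have hx_eq_zero {δ γ : Omega1} (h : γ ∉ A δ) : x δ γ = 0 :=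
    Function.notMem_support.1 ((hsupp δ).symm ▸ h)
  refine one_lt_normA_of_mem_of_mem (fun B hB => sum_sq_sub_le_four (hsum α B hB) (hsum β B hB))
    hs hξs hγs hγξ ?_ ?_
  · simp [hx_eq_zero fun h => hdisj h hξβ, hx1 β]
  · rw [Pi.sub_apply, hx_eq_zero fun h => hdisj hγα h, sub_zero]
    exact Function.mem_support.1 ((hsupp α).symm ▸ hγα)

/-- the construction of an uncountable `(1+)`-separated subset of the
unit sphere of an SW-space from maximal `𝒜`-free separated sets `A_α`. -/
theorem stmt7 (𝒜 : Set (Finset Omega1)) (h𝒜 : IsT0Family 𝒜)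
    (A : Omega1 → Set Omega1)
    (hne : ∀ α, (A α).Nonempty) (hct : ∀ α, (A α).Countable)
    (hsep : ∀ α β : Omega1, α < β → ∀ x ∈ A α, ∀ y ∈ A β, x < y)
    (hfree : ∀ α, ∀ s : Finset Omega1, ↑s ⊆ A α → s ∈ 𝒜 → s.card ≤ 1)
    (hmax : ∀ α, ∀ ξ : Omega1, ξ ∉ A α → (∀ β, β < α → ∀ y ∈ A β, y < ξ) →
      ∃ s : Finset Omega1, ↑s ⊆ A α ∪ {ξ} ∧ s ∈ 𝒜 ∧ 2 ≤ s.card)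
    (x : Omega1 → Omega1 → ℝ)
    (hsupp : ∀ α, Function.support (x α) = A α)
    (m : Omega1 → Omega1)
    (hm : ∀ α, m α ∈ A α ∧ ∀ y ∈ A α, m α ≤ y)
    (hx1 : ∀ α, x α (m α) = 1)
    (hxb : ∀ α γ, |x α γ| ≤ 1) :
    (∀ α, normA 𝒜 (x α) = 1) ∧
      ∀ α β : Omega1, α < β → 1 < normA 𝒜 (x α - x β) :=
  stmt7_general 𝒜 h𝒜 A hsep hfree hmax x hsupp m hm hx1 hxb
end
end

section
/- Let 𝒜 be a family of finite subsets of ω₁ closed under subsets. Suppose {p_α : α < ω₁} is an uncountable family of pairwise disjoint finite subsets of ω₁, each of the same cardinality, such that (i) no p_α contains a two-element subset in 𝒜, and (ii) for all α ≠ β there exist ξ ∈ p_α and η ∈ p_β with {ξ, η} ∈ 𝒜. Then the characteristic functions 𝟙_{p_α} lie on the unit sphere of (c_00(ω₁), ‖·‖_𝒜) and form an uncountable √2-equilateral set, i.e. ‖𝟙_{p_α} − 𝟙_{p_β}‖_𝒜 = √2 for all α ≠ β. -/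
noncomputable section

/-!
By (i), downward closure of `𝒜` lets every `A ∈ 𝒜` meet each `p α` in at most one point, so
the sums defining the norms are at most `1` and `2`. A singleton inside `p α`, respectively the
pair `{ξ, η}` given by (ii), attains these bounds.
-/

open Finset

instance : Nontrivial Omega1 := by
  rw [← Cardinal.one_lt_iff_nontrivial, Cardinal.mk_toType, Ordinal.card_omega]
  exact Cardinal.one_lt_aleph0.trans Cardinal.aleph0_lt_aleph_one

section Indicator

variable {ι : Type*} [DecidableEq ι]

lemma card_inter_le_one_of_forall_pair_notMem {𝒜 : Set (Finset ι)}
    (hdown : ∀ A ∈ 𝒜, ∀ B : Finset ι, B ⊆ A → B ∈ 𝒜) {s : Finset ι}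
    (hfree : ∀ ξ ∈ s, ∀ η ∈ s, ξ ≠ η → ({ξ, η} : Finset ι) ∉ 𝒜)
    {A : Finset ι} (hA : A ∈ 𝒜) : #(A ∩ s) ≤ 1 := by
  by_contra! h
  obtain ⟨ξ, hξ, η, hη, hne⟩ := one_lt_card.mp h
  rw [mem_inter] at hξ hη
  exact hfree ξ hξ.2 η hη.2 hne <|
    hdown A hA _ (insert_subset hξ.1 (singleton_subset_iff.mpr hη.1))

lemma sum_sq_indicator_one (s A : Finset ι) :
    ∑ γ ∈ A, ((↑s : Set ι).indicator (fun _ => (1 : ℝ)) γ) ^ 2 = #(A ∩ s) := by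
  rw [← filter_mem_eq_inter, card_filter, Nat.cast_sum]
  refine sum_congr rfl fun γ _ => ?_
  by_cases h : γ ∈ s <;> simp [h]

lemma sum_sq_indicator_one_sub_indicator_one {s t : Finset ι} (hst : Disjoint s t)
    (A : Finset ι) :
    ∑ γ ∈ A, (((↑s : Set ι).indicator (fun _ => (1 : ℝ)) -
        (↑t : Set ι).indicator (fun _ => (1 : ℝ))) γ) ^ 2 = #(A ∩ s) + #(A ∩ t) := by
  rw [← sum_sq_indicator_one, ← sum_sq_indicator_one, ← sum_add_distrib]
  refine sum_congr rfl fun γ _ => ?_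
  by_cases hs : γ ∈ s
  · simp [hs, disjoint_left.mp hst hs]
  · by_cases ht : γ ∈ t <;> simp [hs, ht]

end Indicator

lemma normA_eq_of_sum_sq_le_of_exists_eq {𝒜 : Set (Finset Omega1)} {x : Omega1 → ℝ}
    {c : ℝ} (hc : 0 ≤ c) (hle : ∀ A ∈ 𝒜, ∑ γ ∈ A, x γ ^ 2 ≤ c ^ 2)
    (hex : ∃ A ∈ 𝒜, ∑ γ ∈ A, x γ ^ 2 = c ^ 2) : normA 𝒜 x = c := by
  refine IsGreatest.csSup_eq ⟨?_, ?_⟩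
  · obtain ⟨A, hA, hsum⟩ := hex
    exact ⟨A, hA, by rw [hsum, Real.sqrt_sq hc]⟩
  · rintro r ⟨A, hA, rfl⟩
    exact Real.sqrt_le_left hc |>.mpr (hle A hA)

theorem stmt8_general (𝒜 : Set (Finset Omega1)) (h𝒜 : IsGoodFamily 𝒜)
    (p : Omega1 → Finset Omega1)
    (hdisj : ∀ α β : Omega1, α ≠ β → Disjoint (p α) (p β))
    (hfree : ∀ α, ∀ ξ ∈ p α, ∀ η ∈ p α, ξ ≠ η → ({ξ, η} : Finset Omega1) ∉ 𝒜)
    (hlink : ∀ α β : Omega1, α ≠ β →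
      ∃ ξ ∈ p α, ∃ η ∈ p β, ({ξ, η} : Finset Omega1) ∈ 𝒜) :
    (∀ α, normA 𝒜 ((↑(p α) : Set Omega1).indicator fun _ => (1 : ℝ)) = 1) ∧
      ∀ α β : Omega1, α ≠ β →
        normA 𝒜 (((↑(p α) : Set Omega1).indicator fun _ => (1 : ℝ)) -
            ((↑(p β) : Set Omega1).indicator fun _ => (1 : ℝ))) = Real.sqrt 2 := by
  have hmeet (α : Omega1) {A : Finset Omega1} (hA : A ∈ 𝒜) : (#(A ∩ p α) : ℝ) ≤ 1 := by
    exact_mod_cast card_inter_le_one_of_forall_pair_notMem h𝒜.1 (hfree α) hA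
  refine ⟨fun α => ?_, fun α β hαβ => ?_⟩
  · obtain ⟨β, hβ⟩ := exists_ne α
    obtain ⟨ξ, hξ, -⟩ := hlink α β hβ.symm
    refine normA_eq_of_sum_sq_le_of_exists_eq zero_le_one (fun A hA => ?_) ⟨{ξ}, h𝒜.2 ξ, ?_⟩
    · simpa [sum_sq_indicator_one] using hmeet α hA
    · simp [hξ]
  · obtain ⟨ξ, hξ, η, hη, hpair⟩ := hlink α β hαβ
    have hd := hdisj α β hαβ
    have hξη : ξ ≠ η := fun h => disjoint_left.mp hd hξ (h ▸ hη)
    refine normA_eq_of_sum_sq_le_of_exists_eq (Real.sqrt_nonneg 2) (fun A hA => ?_)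
      ⟨{ξ, η}, hpair, ?_⟩
    · rw [sum_sq_indicator_one_sub_indicator_one hd, Real.sq_sqrt zero_le_two]
      linarith [hmeet α hA, hmeet β hA]
    · rw [sum_pair hξη, Real.sq_sqrt zero_le_two]
      norm_num [hξ, hη, disjoint_left.mp hd hξ, disjoint_right.mp hd hη]

/-- an uncountable antichain of `𝒜`-free finite sets yields an
uncountable `√2`-equilateral set of characteristic functions on the unit sphere. -/
theorem stmt8 (𝒜 : Set (Finset Omega1)) (h𝒜 : IsGoodFamily 𝒜)
    (p : Omega1 → Finset Omega1) (k : ℕ)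
    (hcard : ∀ α, (p α).card = k)
    (hdisj : ∀ α β : Omega1, α ≠ β → Disjoint (p α) (p β))
    (hfree : ∀ α, ∀ ξ ∈ p α, ∀ η ∈ p α, ξ ≠ η → ({ξ, η} : Finset Omega1) ∉ 𝒜)
    (hlink : ∀ α β : Omega1, α ≠ β →
      ∃ ξ ∈ p α, ∃ η ∈ p β, ({ξ, η} : Finset Omega1) ∈ 𝒜) :
    (∀ α, normA 𝒜 ((↑(p α) : Set Omega1).indicator fun _ => (1 : ℝ)) = 1) ∧
      ∀ α β : Omega1, α ≠ β →
        normA 𝒜 (((↑(p α) : Set Omega1).indicator fun _ => (1 : ℝ)) -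
            ((↑(p β) : Set Omega1).indicator fun _ => (1 : ℝ))) = Real.sqrt 2 :=
  stmt8_general 𝒜 h𝒜 p hdisj hfree hlink
end
end

section
/- Let 𝒜 be a strong T₀-family. For every δ > 0 there is ε > 0 such that for every uncountable (1−ε)-separated subset {x_α : α < ω₁} of the unit sphere of X_𝒜, there are α < β with ‖x_α − x_β‖_𝒜 > √2 − δ and there are ξ < η with ‖x_ξ − x_η‖_𝒜 < 1 + δ. -/
/-!
Approximate every `x_α` within `ε` by a finitely supported `y_α`. The Δ-system lemma and a
pigeonhole argument on the values on the root give uncountably many indices whose `y_α` are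
supported on `R ∪ D_α`, with a common root `R` on which they nearly agree and pairwise disjoint
tails `D_α`. If no set of `𝒜` meets both `D_ξ` and `D_η`, then `‖x_ξ - x_η‖` exceeds the largest
`𝒜`-mass of the two tails by at most `3ε`. The strong T₀ property yields such an unlinked pair
inside every uncountable subfamily, so by `(1 - ε)`-separation all but countably many tails have
`𝒜`-mass above `1 - 5ε`. Among those it also yields a pair with all pairs between `D_ξ` and `D_η`
in `𝒜`; then the union of the two heavy sets lies in `𝒜`, whence
`‖x_ξ - x_η‖ > √2 (1 - 5ε) - 2ε`, while an unlinked pair has `‖x_ξ - x_η‖ ≤ 1 + 4ε`.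
-/

noncomputable section

/-- `𝒜` is a strong T₀-family. -/
def IsStrongT0Family (𝒜 : Set (Finset Omega1)) : Prop :=
  (∀ A ∈ 𝒜, ∀ B : Finset Omega1, B ⊆ A → B ∈ 𝒜) ∧
  (∀ α : Omega1, ({α} : Finset Omega1) ∈ 𝒜) ∧
  (∀ F : Omega1 → Finset Omega1, Function.Injective F →
    (∀ ξ η : Omega1, ξ ≠ η → Disjoint (F ξ) (F η)) →
    ((∃ ξ η : Omega1, ξ ≠ η ∧
        ∀ α ∈ F ξ, ∀ β ∈ F η, ({α, β} : Finset Omega1) ∉ 𝒜) ∧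
     (∃ ξ η : Omega1, ξ ≠ η ∧
        ∀ α ∈ F ξ, ∀ β ∈ F η, ({α, β} : Finset Omega1) ∈ 𝒜))) ∧
  (∀ C : Finset Omega1,
    (∀ α ∈ C, ∀ β ∈ C, α ≠ β → ({α, β} : Finset Omega1) ∈ 𝒜) → C ∈ 𝒜)

/-- `x` belongs to the concrete representation of the space `X_𝒜`, i.e. it is a
`‖·‖_𝒜`-limit of finitely supported vectors. -/
def MemXA (𝒜 : Set (Finset Omega1)) (x : Omega1 → ℝ) : Prop :=
  ∀ ε : ℝ, 0 < ε → ∃ y : Omega1 → ℝ,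
    (Function.support y).Finite ∧ normA 𝒜 (x - y) ≤ ε

open Set Function

section NormOn

variable {β : Type*} {A B : Finset β} {f g h : β → ℝ}

def normOn (A : Finset β) (f : β → ℝ) : ℝ :=
  √(∑ a ∈ A, f a ^ 2)

lemma normOn_nonneg : 0 ≤ normOn A f :=
  Real.sqrt_nonneg _

lemma sq_normOn : normOn A f ^ 2 = ∑ a ∈ A, f a ^ 2 :=
  Real.sq_sqrt (Finset.sum_nonneg fun _ _ => sq_nonneg _)

lemma normOn_eq_norm (A : Finset β) (f : β → ℝ) :
    normOn A f = ‖(WithLp.toLp 2 (fun a : A => f a) : EuclideanSpace ℝ A)‖ := by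
  rw [EuclideanSpace.norm_eq]
  simp [normOn, ← Finset.sum_attach A (fun a => f a ^ 2)]

lemma normOn_add_le : normOn A (f + g) ≤ normOn A f + normOn A g := by
  simp only [normOn_eq_norm]
  exact norm_add_le (WithLp.toLp 2 (fun a : A => f a) : EuclideanSpace ℝ A)
    (WithLp.toLp 2 fun a : A => g a)

lemma normOn_congr (hfg : ∀ a ∈ A, f a = g a) : normOn A f = normOn A g := by
  rw [normOn, normOn, Finset.sum_congr rfl fun a ha => by rw [hfg a ha]]

lemma normOn_sub_comm : normOn A (f - g) = normOn A (g - f) := by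
  simp only [normOn, Pi.sub_apply, sub_sq_comm]

lemma normOn_sub_le : normOn A (f - g) ≤ normOn A f + normOn A g := by
  have hneg : normOn A (-g) = normOn A g := by simp only [normOn, Pi.neg_apply, neg_sq]
  simpa only [sub_eq_add_neg, hneg] using normOn_add_le (A := A) (f := f) (g := -g)

lemma normOn_sub_le_sub_add_sub : normOn A (f - h) ≤ normOn A (f - g) + normOn A (g - h) := by
  simpa only [sub_add_sub_cancel] using normOn_add_le (A := A) (f := f - g) (g := g - h)

lemma normOn_le_normOn_of_eq_zero (hf : ∀ a ∈ A, a ∉ B → f a = 0) :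
    normOn A f ≤ normOn B f := by
  classical
  refine Real.sqrt_le_sqrt ?_
  rw [← Finset.sum_subset Finset.inter_subset_left fun a ha hAB => by
    rw [hf a ha fun hB => hAB (Finset.mem_inter.2 ⟨ha, hB⟩), sq, zero_mul]]
  exact Finset.sum_le_sum_of_subset_of_nonneg Finset.inter_subset_right
    fun _ _ _ => sq_nonneg _

lemma normOn_mono (hAB : A ⊆ B) : normOn A f ≤ normOn B f :=
  normOn_le_normOn_of_eq_zero fun _ ha hB => absurd (hAB ha) hB

lemma normOn_union_le [DecidableEq β] : normOn (A ∪ B) f ≤ normOn A f + normOn B f := by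
  refine Real.sqrt_le_iff.2 ⟨add_nonneg normOn_nonneg normOn_nonneg, ?_⟩
  have hinter : 0 ≤ ∑ a ∈ A ∩ B, f a ^ 2 := Finset.sum_nonneg fun _ _ => sq_nonneg _
  have hunion := Finset.sum_union_inter (s₁ := A) (s₂ := B) (f := fun a => f a ^ 2)
  nlinarith [sq_normOn (A := A) (f := f), sq_normOn (A := B) (f := f),
    mul_nonneg (normOn_nonneg (A := A) (f := f)) (normOn_nonneg (A := B) (f := f))]

lemma sq_normOn_union [DecidableEq β] (hAB : Disjoint A B) :
    normOn (A ∪ B) f ^ 2 = normOn A f ^ 2 + normOn B f ^ 2 := by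
  simp only [sq_normOn, Finset.sum_union hAB]

lemma normOn_le_card_mul {c : ℝ} (hf : ∀ a ∈ A, |f a| ≤ c) : normOn A f ≤ A.card * c := by
  rcases A.eq_empty_or_nonempty with rfl | ⟨a, ha⟩
  · simp [normOn]
  have hc : 0 ≤ c := (abs_nonneg _).trans (hf a ha)
  have hsum : ∑ a ∈ A, f a ^ 2 ≤ A.card * c ^ 2 := by
    simpa using Finset.sum_le_sum fun a ha =>
      sq_le_sq' (abs_le.1 (hf a ha)).1 (abs_le.1 (hf a ha)).2
  have hcard : (A.card : ℝ) ≤ (A.card : ℝ) ^ 2 := by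
    exact_mod_cast Nat.le_self_pow two_ne_zero A.card
  refine Real.sqrt_le_iff.2 ⟨by positivity, hsum.trans ?_⟩
  rw [mul_pow]
  exact mul_le_mul_of_nonneg_right hcard (sq_nonneg c)

end NormOn

section NormA

variable {𝒜 : Set (Finset Omega1)} {f g : Omega1 → ℝ} {A : Finset Omega1} {C ε : ℝ}

lemma normA_eq_sSup_normOn : normA 𝒜 f = sSup {r | ∃ A ∈ 𝒜, r = normOn A f} := rfl

lemma normA_le (hC : 0 ≤ C) (hf : ∀ A ∈ 𝒜, normOn A f ≤ C) : normA 𝒜 f ≤ C :=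
  Real.sSup_le (by rintro r ⟨A, hA, rfl⟩; exact hf A hA) hC

lemma normOn_le_normA (hf : ∀ B ∈ 𝒜, normOn B f ≤ C) (hA : A ∈ 𝒜) :
    normOn A f ≤ normA 𝒜 f :=
  le_csSup ⟨C, by rintro r ⟨B, hB, rfl⟩; exact hf B hB⟩ ⟨A, hA, rfl⟩

-- `sSup` of an unbounded set is the junk value `0`, so `normA 𝒜 f ≠ 0` forces boundedness.
lemma normOn_le_normA_of_ne_zero (hf : normA 𝒜 f ≠ 0) (hA : A ∈ 𝒜) :
    normOn A f ≤ normA 𝒜 f := by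
  by_cases hbdd : BddAbove {r | ∃ A ∈ 𝒜, r = normOn A f}
  · exact le_csSup hbdd ⟨A, hA, rfl⟩
  · exact absurd (Real.sSup_of_not_bddAbove hbdd) hf

lemma normOn_sub_le_normA_sub (hf : normA 𝒜 f ≠ 0) (hg : normA 𝒜 g ≠ 0) (hA : A ∈ 𝒜) :
    normOn A (f - g) ≤ normA 𝒜 (f - g) :=
  normOn_le_normA (fun _ hB => normOn_sub_le.trans
    (add_le_add (normOn_le_normA_of_ne_zero hf hB) (normOn_le_normA_of_ne_zero hg hB))) hA

lemma normA_sub_comm : normA 𝒜 (f - g) = normA 𝒜 (g - f) := by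
  simp only [normA_eq_sSup_normOn, normOn_sub_comm]

lemma MemXA.exists_normOn_sub_le (hmem : MemXA 𝒜 f) (hf : normA 𝒜 f ≠ 0) (hε : 0 < ε) :
    ∃ (N : Finset Omega1) (g : Omega1 → ℝ), (∀ a ∉ N, g a = 0) ∧
      ∀ A ∈ 𝒜, normOn A (f - g) ≤ ε := by
  obtain ⟨g, hg, hfg⟩ := hmem ε hε
  have hgN : ∀ a ∉ hg.toFinset, g a = 0 := fun a ha => by simpa using ha
  have hbdd : ∀ B ∈ 𝒜, normOn B (f - g) ≤ normA 𝒜 f + normOn hg.toFinset g := fun B hB =>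
    normOn_sub_le.trans (add_le_add (normOn_le_normA_of_ne_zero hf hB)
      (normOn_le_normOn_of_eq_zero fun a _ ha => hgN a ha))
  exact ⟨hg.toFinset, g, hgN, fun A hA => (normOn_le_normA hbdd hA).trans hfg⟩

end NormA

section Uncountable

variable {ι β : Type*} {S : Set ι}

lemma exists_not_countable_fiber {B : Type*} [Countable B] (hS : ¬S.Countable) (f : ι → B) :
    ∃ b, ¬{ξ ∈ S | f ξ = b}.Countable := by
  by_contra! h
  exact hS ((countable_iUnion h).mono fun ξ hξ =>
    mem_iUnion.2 ⟨f ξ, mem_sep (p := fun ξ => f ξ = _) hξ rfl⟩)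

lemma exists_not_countable_pairwiseDisjoint (G : ι → Finset β) (hS : ¬S.Countable)
    (hG : ∀ b, {ξ ∈ S | b ∈ G ξ}.Countable) :
    ∃ T ⊆ S, ¬T.Countable ∧ T.PairwiseDisjoint G := by
  obtain ⟨T, hT⟩ := zorn_subset {T | T ⊆ S ∧ T.PairwiseDisjoint G} fun c hc hchain => by
    refine ⟨⋃₀ c, ⟨?_, ?_⟩, fun _ => subset_sUnion_of_mem⟩
    · exact sUnion_subset fun T hT => (hc hT).1
    · exact (hchain.pairwiseDisjoint_sUnion G).2 fun T hT => (hc hT).2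
  refine ⟨T, hT.prop.1, fun hTc => ?_, hT.prop.2⟩
  -- a countable `T` meets only countably many `G ξ`, so it could be enlarged
  have hmeet : {ξ ∈ S | ∃ η ∈ T, ¬Disjoint (G η) (G ξ)}.Countable := by
    refine (hTc.biUnion fun η _ => (G η).countable_toSet.biUnion fun b _ => hG b).mono ?_
    rintro ξ ⟨hξ, η, hη, hηξ⟩
    obtain ⟨b, hbη, hbξ⟩ := Finset.not_disjoint_iff.1 hηξ
    exact mem_biUnion hη (mem_biUnion hbη ⟨hξ, hbξ⟩)
  obtain ⟨ξ, hξS, hξ⟩ := not_subset.1 fun hsub => hS ((hTc.union hmeet).mono hsub)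
  simp only [mem_union, mem_ofPred_eq, not_or, not_and, not_exists, not_not] at hξ
  have hins : insert ξ T ⊆ T := hT.2
    ⟨insert_subset hξS hT.prop.1, hT.prop.2.insert fun η hη _ => (hξ.2 hξS η hη).symm⟩
    (subset_insert ξ T)
  exact hξ.1 (hins (mem_insert ξ T))

lemma exists_root_pairwiseDisjoint_sdiff_of_card_le [DecidableEq β] (n : ℕ) (G : ι → Finset β)
    (hS : ¬S.Countable) (hG : ∀ ξ ∈ S, (G ξ).card ≤ n) :
    ∃ (R : Finset β), ∃ T ⊆ S, ¬T.Countable ∧ T.PairwiseDisjoint fun ξ => G ξ \ R := by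
  induction n generalizing G S with
  | zero =>
    refine ⟨∅, S, subset_rfl, hS, fun ξ hξ η _ _ => ?_⟩
    rw [onFun, Finset.card_eq_zero.1 (Nat.le_zero.1 (hG ξ hξ))]
    exact Finset.disjoint_empty_left _
  | succ n ih =>
    by_cases hcount : ∀ b, {ξ ∈ S | b ∈ G ξ}.Countable
    · obtain ⟨T, hTS, hT, hTG⟩ := exists_not_countable_pairwiseDisjoint G hS hcount
      exact ⟨∅, T, hTS, hT, by simpa using hTG⟩
    obtain ⟨b, hb⟩ := not_forall.1 hcount
    obtain ⟨R, T, hTS, hT, hTR⟩ := ih (fun ξ => (G ξ).erase b) hb fun ξ hξ => by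
      simpa [Finset.card_erase_of_mem hξ.2] using Nat.sub_le_of_le_add (hG ξ hξ.1)
    refine ⟨insert b R, T, fun ξ hξ => (hTS hξ).1, hT, ?_⟩
    have herase : ∀ ξ, G ξ \ insert b R = (G ξ).erase b \ R := fun ξ => by
      ext; simp only [Finset.mem_sdiff, Finset.mem_insert, Finset.mem_erase]; tauto
    simpa only [herase] using hTR

lemma exists_root_pairwiseDisjoint_sdiff [DecidableEq β] (G : ι → Finset β)
    (hS : ¬S.Countable) :
    ∃ (R : Finset β), ∃ T ⊆ S, ¬T.Countable ∧ T.PairwiseDisjoint fun ξ => G ξ \ R := by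
  obtain ⟨n, hn⟩ := exists_not_countable_fiber hS fun ξ => (G ξ).card
  obtain ⟨R, T, hTS, hT, hTR⟩ :=
    exists_root_pairwiseDisjoint_sdiff_of_card_le n G hn fun ξ hξ => hξ.2.le
  exact ⟨R, T, hTS.trans (sep_subset _ _), hT, hTR⟩

lemma exists_not_countable_normOn_sub_le (R : Finset β) (y : ι → β → ℝ) (hS : ¬S.Countable)
    {ε : ℝ} (hε : 0 < ε) :
    ∃ T ⊆ S, ¬T.Countable ∧ ∀ ξ ∈ T, ∀ η ∈ T, normOn R (y ξ - y η) ≤ ε := by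
  set θ := ε / (R.card + 1)
  have hθ : 0 < θ := by positivity
  obtain ⟨k, hk⟩ := exists_not_countable_fiber hS fun ξ (ρ : R) => ⌊y ξ ρ / θ⌋
  refine ⟨_, sep_subset _ _, hk, fun ξ hξ η hη => ?_⟩
  have hclose : ∀ ρ ∈ R, |(y ξ - y η) ρ| ≤ θ := fun ρ hρ => by
    have hfloor := Int.abs_sub_lt_one_of_floor_eq_floor (congrFun (hξ.2.trans hη.2.symm) ⟨ρ, hρ⟩)
    rw [div_sub_div_same, abs_div, abs_of_pos hθ, div_lt_one hθ] at hfloor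
    exact hfloor.le
  calc normOn R (y ξ - y η) ≤ R.card * θ := normOn_le_card_mul hclose
    _ ≤ ε := by
      rw [mul_div_assoc', div_le_iff₀ (by positivity)]
      nlinarith

end Uncountable

lemma not_countable_univ_omega1 : ¬(univ : Set Omega1).Countable := by
  rw [← Cardinal.le_aleph0_iff_set_countable, Cardinal.mk_univ, Cardinal.mk_toType,
    Ordinal.card_omega, not_le]
  exact Cardinal.aleph0_lt_aleph_one

lemma exists_injective_mem_of_not_countable {S : Set Omega1} (hS : ¬S.Countable) :
    ∃ f : Omega1 → Omega1, Injective f ∧ ∀ i, f i ∈ S := by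
  rw [← Cardinal.le_aleph0_iff_set_countable, not_le, ← Cardinal.aleph_one_le_iff,
    ← Ordinal.card_omega, ← Cardinal.mk_toType] at hS
  obtain ⟨e⟩ := hS
  exact ⟨fun i => e i, Subtype.val_injective.comp e.injective, fun i => (e i).2⟩

namespace IsStrongT0Family

variable {𝒜 : Set (Finset Omega1)} {P Q A B : Finset Omega1}

lemma exists_unlinked_and_linked (h𝒜 : IsStrongT0Family 𝒜) {D : Omega1 → Finset Omega1}
    {S : Set Omega1} (hS : ¬S.Countable) (hD : S.PairwiseDisjoint D) :
    (∃ ξ ∈ S, ∃ η ∈ S, ξ ≠ η ∧ ∀ a ∈ D ξ, ∀ b ∈ D η, ({a, b} : Finset Omega1) ∉ 𝒜) ∧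
    (∃ ξ ∈ S, ∃ η ∈ S, ξ ≠ η ∧ ∀ a ∈ D ξ, ∀ b ∈ D η, ({a, b} : Finset Omega1) ∈ 𝒜) := by
  by_cases hempty : {ξ ∈ S | D ξ = ∅}.Countable
  · obtain ⟨f, hf, hfS⟩ := exists_injective_mem_of_not_countable
      fun h => hS (h.of_sdiff hempty)
    have hdisj : ∀ i j, i ≠ j → Disjoint (D (f i)) (D (f j)) := fun i j hij =>
      hD (hfS i).1 (hfS j).1 (hf.ne hij)
    -- nonempty pairwise disjoint sets are distinct
    have hinj : Injective (D ∘ f) := fun i j hij => by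
      by_contra hne
      have hi := hdisj i j hne
      rw [comp_apply, comp_apply] at hij
      rw [hij, disjoint_self, Finset.bot_eq_empty] at hi
      exact (hfS j).2 ⟨(hfS j).1, hi⟩
    obtain ⟨⟨i, j, hij, hunlinked⟩, ⟨k, l, hkl, hlinked⟩⟩ := h𝒜.2.2.1 _ hinj hdisj
    exact ⟨⟨f i, (hfS i).1, f j, (hfS j).1, hf.ne hij, hunlinked⟩,
      ⟨f k, (hfS k).1, f l, (hfS l).1, hf.ne hkl, hlinked⟩⟩
  · have hinf : {ξ ∈ S | D ξ = ∅}.Infinite := fun h => hempty h.countable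
    obtain ⟨ξ, hξ, η, hη, hne⟩ := hinf.nontrivial
    exact ⟨⟨ξ, hξ.1, η, hη.1, hne, by simp [hξ.2]⟩, ⟨ξ, hξ.1, η, hη.1, hne, by simp [hξ.2]⟩⟩

lemma disjoint_or_disjoint (h𝒜 : IsStrongT0Family 𝒜)
    (hPQ : ∀ a ∈ P, ∀ b ∈ Q, ({a, b} : Finset Omega1) ∉ 𝒜) (hA : A ∈ 𝒜) :
    Disjoint A P ∨ Disjoint A Q := by
  by_contra! h
  obtain ⟨a, haA, haP⟩ := Finset.not_disjoint_iff.1 h.1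
  obtain ⟨b, hbA, hbQ⟩ := Finset.not_disjoint_iff.1 h.2
  exact hPQ a haP b hbQ (h𝒜.1 A hA _ (Finset.insert_subset haA (Finset.singleton_subset_iff.2 hbA)))

lemma union_mem (h𝒜 : IsStrongT0Family 𝒜) (hA : A ∈ 𝒜) (hB : B ∈ 𝒜)
    (hAB : ∀ a ∈ A, ∀ b ∈ B, ({a, b} : Finset Omega1) ∈ 𝒜) : A ∪ B ∈ 𝒜 := by
  have pair_mem : ∀ C ∈ 𝒜, ∀ a ∈ C, ∀ b ∈ C, ({a, b} : Finset Omega1) ∈ 𝒜 :=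
    fun C hC a ha b hb => h𝒜.1 C hC _ (Finset.insert_subset ha (Finset.singleton_subset_iff.2 hb))
  refine h𝒜.2.2.2 _ fun a ha b hb _ => ?_
  rcases Finset.mem_union.1 ha with ha | ha <;> rcases Finset.mem_union.1 hb with hb | hb
  · exact pair_mem A hA a ha b hb
  · exact hAB a ha b hb
  · rw [Finset.pair_comm]
    exact hAB b hb a ha
  · exact pair_mem B hB a ha b hb

end IsStrongT0Family

structure RootedApprox (𝒜 : Set (Finset Omega1)) (x y : Omega1 → Omega1 → ℝ) (ε : ℝ)
    (R : Finset Omega1) (D : Omega1 → Finset Omega1) (S : Set Omega1) : Prop where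
  normOn_sub_le : ∀ ξ ∈ S, ∀ A ∈ 𝒜, normOn A (x ξ - y ξ) ≤ ε
  eq_zero : ∀ ξ ∈ S, ∀ a, a ∉ R → a ∉ D ξ → y ξ a = 0
  disjoint_root : ∀ ξ ∈ S, Disjoint R (D ξ)
  pairwiseDisjoint : S.PairwiseDisjoint D
  normOn_root_sub_le : ∀ ξ ∈ S, ∀ η ∈ S, normOn R (y ξ - y η) ≤ ε

lemma exists_rootedApprox {𝒜 : Set (Finset Omega1)} {x : Omega1 → Omega1 → ℝ} {ε : ℝ}
    (hmem : ∀ ξ, MemXA 𝒜 (x ξ)) (hx : ∀ ξ, normA 𝒜 (x ξ) ≠ 0) (hε : 0 < ε) :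
    ∃ y R D S, ¬S.Countable ∧ RootedApprox 𝒜 x y ε R D S := by
  choose N y hyN hy using fun ξ => (hmem ξ).exists_normOn_sub_le (hx ξ) hε
  obtain ⟨R, T, -, hT, hTR⟩ := exists_root_pairwiseDisjoint_sdiff N not_countable_univ_omega1
  obtain ⟨S, hST, hS, hSR⟩ := exists_not_countable_normOn_sub_le R y hT hε
  exact ⟨y, R, fun ξ => N ξ \ R, S, hS,
    { normOn_sub_le := fun ξ _ => hy ξ
      eq_zero := fun ξ _ a haR haD => hyN ξ a fun haN => haD (Finset.mem_sdiff.2 ⟨haN, haR⟩)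
      disjoint_root := fun _ _ => Finset.disjoint_sdiff
      pairwiseDisjoint := hTR.subset hST
      normOn_root_sub_le := hSR }⟩

namespace RootedApprox

variable {𝒜 : Set (Finset Omega1)} {x y : Omega1 → Omega1 → ℝ} {ε s t : ℝ} {R : Finset Omega1}
  {D : Omega1 → Finset Omega1} {S T : Set Omega1} {ξ η : Omega1} {A B : Finset Omega1}

lemma mono (h : RootedApprox 𝒜 x y ε R D S) (hTS : T ⊆ S) : RootedApprox 𝒜 x y ε R D T where
  normOn_sub_le ξ hξ := h.normOn_sub_le ξ (hTS hξ)
  eq_zero ξ hξ := h.eq_zero ξ (hTS hξ)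
  disjoint_root ξ hξ := h.disjoint_root ξ (hTS hξ)
  pairwiseDisjoint := h.pairwiseDisjoint.subset hTS
  normOn_root_sub_le ξ hξ η hη := h.normOn_root_sub_le ξ (hTS hξ) η (hTS hη)

lemma normOn_sub_le_of_disjoint (h : RootedApprox 𝒜 x y ε R D S) (hξ : ξ ∈ S) (hη : η ∈ S)
    (hne : ξ ≠ η) (hA : Disjoint A (D η)) :
    normOn A (y ξ - y η) ≤ ε + normOn (A ∩ D ξ) (y ξ) := by
  have hηξ : ∀ a ∈ D ξ, y η a = 0 := fun a ha =>
    h.eq_zero η hη a (Finset.disjoint_right.1 (h.disjoint_root ξ hξ) ha)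
      (Finset.disjoint_left.1 (h.pairwiseDisjoint hξ hη hne) ha)
  calc normOn A (y ξ - y η) ≤ normOn (A ∩ R ∪ A ∩ D ξ) (y ξ - y η) := by
        refine normOn_le_normOn_of_eq_zero fun a ha haRD => ?_
        simp only [Finset.mem_union, Finset.mem_inter, ha, true_and, not_or] at haRD
        rw [Pi.sub_apply, h.eq_zero ξ hξ a haRD.1 haRD.2,
          h.eq_zero η hη a haRD.1 (Finset.disjoint_left.1 hA ha), sub_zero]
    _ ≤ normOn (A ∩ R) (y ξ - y η) + normOn (A ∩ D ξ) (y ξ - y η) := normOn_union_le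
    _ ≤ ε + normOn (A ∩ D ξ) (y ξ) := by
      refine add_le_add ((normOn_mono Finset.inter_subset_right).trans
        (h.normOn_root_sub_le ξ hξ η hη)) (normOn_congr fun a ha => ?_).le
      rw [Pi.sub_apply, hηξ a (Finset.mem_inter.1 ha).2, sub_zero]

lemma normA_sub_le (h : RootedApprox 𝒜 x y ε R D S) (hξ : ξ ∈ S) (hη : η ∈ S) (hne : ξ ≠ η)
    (hs : 0 ≤ s) (hsξ : ∀ A ∈ 𝒜, normOn (A ∩ D ξ) (y ξ) ≤ s)
    (hsη : ∀ A ∈ 𝒜, normOn (A ∩ D η) (y η) ≤ s)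
    (hsplit : ∀ A ∈ 𝒜, Disjoint A (D ξ) ∨ Disjoint A (D η)) :
    normA 𝒜 (x ξ - x η) ≤ s + 3 * ε := by
  have hε : 0 ≤ ε := normOn_nonneg.trans (h.normOn_root_sub_le ξ hξ ξ hξ)
  refine normA_le (by positivity) fun A hA => ?_
  have hy : normOn A (y ξ - y η) ≤ ε + s := by
    rcases hsplit A hA with hAξ | hAη
    · rw [normOn_sub_comm]
      exact (h.normOn_sub_le_of_disjoint hη hξ hne.symm hAξ).trans (by linarith [hsη A hA])
    · exact (h.normOn_sub_le_of_disjoint hξ hη hne hAη).trans (by linarith [hsξ A hA])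
  calc normOn A (x ξ - x η) ≤ normOn A (x ξ - y ξ) + normOn A (y ξ - x η) :=
        normOn_sub_le_sub_add_sub
    _ ≤ normOn A (x ξ - y ξ) + (normOn A (y ξ - y η) + normOn A (y η - x η)) := by
        gcongr; exact normOn_sub_le_sub_add_sub
    _ ≤ ε + ((ε + s) + ε) := by
        rw [normOn_sub_comm (f := y η)]
        gcongr
        exacts [h.normOn_sub_le ξ hξ A hA, h.normOn_sub_le η hη A hA]
    _ = s + 3 * ε := by ring

lemma exists_normA_sub_le (h𝒜 : IsStrongT0Family 𝒜) (h : RootedApprox 𝒜 x y ε R D S)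
    (hS : ¬S.Countable) (hs : 0 ≤ s) (hsmall : ∀ ξ ∈ S, ∀ A ∈ 𝒜, normOn (A ∩ D ξ) (y ξ) ≤ s) :
    ∃ ξ ∈ S, ∃ η ∈ S, ξ ≠ η ∧ normA 𝒜 (x ξ - x η) ≤ s + 3 * ε := by
  obtain ⟨ξ, hξ, η, hη, hne, hunlinked⟩ :=
    (h𝒜.exists_unlinked_and_linked hS h.pairwiseDisjoint).1
  exact ⟨ξ, hξ, η, hη, hne, h.normA_sub_le hξ hη hne hs (hsmall ξ hξ) (hsmall η hη)
    fun A hA => h𝒜.disjoint_or_disjoint hunlinked hA⟩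

lemma lt_normA_sub (h𝒜 : IsStrongT0Family 𝒜) (h : RootedApprox 𝒜 x y ε R D S) (hξ : ξ ∈ S)
    (hη : η ∈ S) (hne : ξ ≠ η) (hxξ : normA 𝒜 (x ξ) ≠ 0) (hxη : normA 𝒜 (x η) ≠ 0)
    (hlinked : ∀ a ∈ D ξ, ∀ b ∈ D η, ({a, b} : Finset Omega1) ∈ 𝒜) (ht : 0 ≤ t)
    (hA : A ∈ 𝒜) (hB : B ∈ 𝒜) (htA : t < normOn (A ∩ D ξ) (y ξ))
    (htB : t < normOn (B ∩ D η) (y η)) :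
    √2 * t - 2 * ε < normA 𝒜 (x ξ - x η) := by
  set U := A ∩ D ξ ∪ B ∩ D η
  have hU : U ∈ 𝒜 := h𝒜.union_mem (h𝒜.1 A hA _ Finset.inter_subset_left)
    (h𝒜.1 B hB _ Finset.inter_subset_left) fun a ha b hb =>
      hlinked a (Finset.mem_inter.1 ha).2 b (Finset.mem_inter.1 hb).2
  have hDξη := h.pairwiseDisjoint hξ hη hne
  have hyU : √2 * t < normOn U (y ξ - y η) := by
    have hyξ : normOn (A ∩ D ξ) (y ξ - y η) = normOn (A ∩ D ξ) (y ξ) := normOn_congr fun a ha => by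
      rw [Pi.sub_apply, h.eq_zero η hη a (Finset.disjoint_right.1 (h.disjoint_root ξ hξ)
        (Finset.mem_inter.1 ha).2) (Finset.disjoint_left.1 hDξη (Finset.mem_inter.1 ha).2),
        sub_zero]
    have hyη : normOn (B ∩ D η) (y ξ - y η) = normOn (B ∩ D η) (y η) := by
      rw [normOn_sub_comm]
      refine normOn_congr fun a ha => ?_
      rw [Pi.sub_apply, h.eq_zero ξ hξ a (Finset.disjoint_right.1 (h.disjoint_root η hη)
        (Finset.mem_inter.1 ha).2) (Finset.disjoint_right.1 hDξη (Finset.mem_inter.1 ha).2),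
        sub_zero]
    refine lt_of_pow_lt_pow_left₀ 2 normOn_nonneg ?_
    rw [sq_normOn_union (hDξη.mono Finset.inter_subset_right Finset.inter_subset_right), hyξ,
      hyη, mul_pow, Real.sq_sqrt zero_le_two]
    nlinarith
  have hxU := normOn_sub_le_normA_sub hxξ hxη hU
  have happrox := h.normOn_sub_le ξ hξ U hU
  have happrox' := h.normOn_sub_le η hη U hU
  have htriangle : normOn U (y ξ - y η) ≤
      normOn U (y ξ - x ξ) + (normOn U (x ξ - x η) + normOn U (x η - y η)) :=
    normOn_sub_le_sub_add_sub.trans (by gcongr; exact normOn_sub_le_sub_add_sub)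
  rw [normOn_sub_comm (f := y ξ) (g := x ξ)] at htriangle
  linarith

lemma exists_lt_normA_sub (h𝒜 : IsStrongT0Family 𝒜) (h : RootedApprox 𝒜 x y ε R D S)
    (hS : ¬S.Countable) (hx : ∀ ξ, normA 𝒜 (x ξ) ≠ 0) (ht : 0 ≤ t)
    (hbig : ∀ ξ ∈ S, ∃ A ∈ 𝒜, t < normOn (A ∩ D ξ) (y ξ)) :
    ∃ ξ ∈ S, ∃ η ∈ S, ξ ≠ η ∧ √2 * t - 2 * ε < normA 𝒜 (x ξ - x η) := by
  obtain ⟨ξ, hξ, η, hη, hne, hlinked⟩ :=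
    (h𝒜.exists_unlinked_and_linked hS h.pairwiseDisjoint).2
  obtain ⟨A, hA, htA⟩ := hbig ξ hξ
  obtain ⟨B, hB, htB⟩ := hbig η hη
  exact ⟨ξ, hξ, η, hη, hne,
    h.lt_normA_sub h𝒜 hξ hη hne (hx ξ) (hx η) hlinked ht hA hB htA htB⟩

end RootedApprox

lemma exists_lt_of_ne_normA_sub {𝒜 : Set (Finset Omega1)} {x : Omega1 → Omega1 → ℝ}
    {P : ℝ → Prop} {ξ η : Omega1} (hne : ξ ≠ η) (hP : P (normA 𝒜 (x ξ - x η))) :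
    ∃ α β : Omega1, α < β ∧ P (normA 𝒜 (x α - x β)) := by
  rcases hne.lt_or_gt with hlt | hlt
  · exact ⟨ξ, η, hlt, hP⟩
  · exact ⟨η, ξ, hlt, normA_sub_comm (f := x ξ) ▸ hP⟩

/-- for every `δ > 0` there is `ε > 0` such that every uncountable
`(1-ε)`-separated subset of the unit sphere of `X_𝒜` contains a pair at distance
more than `√2 - δ` and a pair at distance less than `1 + δ`. -/
theorem stmt11 (𝒜 : Set (Finset Omega1)) (h𝒜 : IsStrongT0Family 𝒜)
    (δ : ℝ) (hδ : 0 < δ) :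
    ∃ ε : ℝ, 0 < ε ∧
      ∀ x : Omega1 → Omega1 → ℝ, Function.Injective x →
        (∀ α, MemXA 𝒜 (x α)) → (∀ α, normA 𝒜 (x α) = 1) →
        (∀ α β : Omega1, α ≠ β → 1 - ε ≤ normA 𝒜 (x α - x β)) →
        (∃ α β : Omega1, α < β ∧ Real.sqrt 2 - δ < normA 𝒜 (x α - x β)) ∧
        (∃ ξ η : Omega1, ξ < η ∧ normA 𝒜 (x ξ - x η) < 1 + δ) := by
  obtain ⟨ε, hε, hεδ, hε1⟩ : ∃ ε : ℝ, 0 < ε ∧ 10 * ε ≤ δ ∧ 10 * ε ≤ 1 :=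
    ⟨min δ 1 / 10, by positivity, by linarith [min_le_left δ 1], by linarith [min_le_right δ 1]⟩
  refine ⟨ε, hε, fun x _ hmem hnorm hsep => ?_⟩
  have hx : ∀ α, normA 𝒜 (x α) ≠ 0 := fun α => by simp [hnorm α]
  obtain ⟨y, R, D, S, hS, h⟩ := exists_rootedApprox hmem hx hε
  -- tails of mass at most `1 - 5ε` would give a pair closer than `1 - ε`
  set small := {ξ ∈ S | ∀ A ∈ 𝒜, normOn (A ∩ D ξ) (y ξ) ≤ 1 - 5 * ε}
  have hsmall : small.Countable := by
    by_contra hunc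
    obtain ⟨ξ, -, η, -, hne, hle⟩ :=
      (h.mono (sep_subset _ _)).exists_normA_sub_le h𝒜 hunc (by linarith) fun ξ hξ => hξ.2
    linarith [hsep ξ η hne]
  have hbig : ∀ ξ ∈ S \ small, ∃ A ∈ 𝒜, 1 - 5 * ε < normOn (A ∩ D ξ) (y ξ) := by
    rintro ξ ⟨hξ, hξsmall⟩
    simpa [small, hξ] using hξsmall
  obtain ⟨ξ, -, η, -, hne, hfar⟩ := (h.mono sdiff_subset).exists_lt_normA_sub h𝒜
    (fun h' => hS (h'.of_sdiff hsmall)) hx (by linarith) hbig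
  have hy : ∀ ξ ∈ S, ∀ A ∈ 𝒜, normOn (A ∩ D ξ) (y ξ) ≤ 1 + ε := fun ξ hξ A hA =>
    calc normOn (A ∩ D ξ) (y ξ) ≤ normOn A (x ξ - (x ξ - y ξ)) := by
          rw [sub_sub_cancel]; exact normOn_mono Finset.inter_subset_left
      _ ≤ 1 + ε := normOn_sub_le.trans (add_le_add
          ((normOn_le_normA_of_ne_zero (hx ξ) hA).trans (hnorm ξ).le) (h.normOn_sub_le ξ hξ A hA))
  obtain ⟨ξ', -, η', -, hne', hclose⟩ := h.exists_normA_sub_le h𝒜 hS (by linarith) hy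
  have hsqrt2 : √2 < 8 / 5 := (Real.sqrt_lt' (by norm_num)).2 (by norm_num)
  exact ⟨exists_lt_of_ne_normA_sub (P := (√2 - δ < ·)) hne (by nlinarith),
    exists_lt_of_ne_normA_sub (P := (· < 1 + δ)) hne' (by linarith)⟩
end
end

section
/- Let c : [ω₁]² → I × J with 0, 1 ∈ I be a T-coloring, and define 𝒜_c = {a ∈ [ω₁]^{<ω} : c₀ is constantly 0 on pairs from a} and ℬ_c = {a ∈ [ω₁]^{<ω} : c₀ is constantly 1 on pairs from a}. Then 𝒜_c and ℬ_c are T-families. -/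
/-!
Fix an uncountable family of disjoint pairs `{a ξ, b ξ}` and join `ξ ≠ η` when `c₀` is `i0` on
`{a ξ, a η}` and `i1` on `{b ξ, b η}`. A clique of size `k` in this graph is exactly a witness for
the last clause of the definition of T-families. By the finite Dushnik–Miller partition relation
`ω₁ → (ω₁, k)²`, if there is no such clique then there is an uncountable independent set, and
re-indexing the pairs along it contradicts the T-coloring property for the colors `(i0, j)` and
`(i1, j)`.
-/

noncomputable section

/-- `c` is a T-coloring: on every uncountable pairwise disjoint family of pairs,
every pair of values is attained coherently. -/
def IsTColoring {I J : Type} (c : Omega1 → Omega1 → I × J) : Prop :=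
  ∀ a b : Omega1 → Omega1, PairwiseDisjointPairs a b →
    ∀ v w : I × J, ∃ ξ η : Omega1, ξ < η ∧
      c (a ξ) (a η) = v ∧ c (b ξ) (b η) = w

/-- The family of finite sets all of whose pairs get first color `i`. -/
def famOf {I J : Type} (c : Omega1 → Omega1 → I × J) (i : I) :
    Set (Finset Omega1) :=
  {s : Finset Omega1 | ∀ α ∈ s, ∀ β ∈ s, α ≠ β → (c α β).1 = i}


open Cardinal Set

namespace SimpleGraph

variable {X : Type*} (G : SimpleGraph X)

theorem exists_uncountable_isIndepSet_of_countable_neighborSet {S : Set X}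
    (hS : ¬S.Countable) (hN : ∀ x ∈ S, (G.neighborSet x ∩ S).Countable) :
    ∃ U ⊆ S, ¬U.Countable ∧ G.IsIndepSet U := by
  obtain ⟨M, hM⟩ := zorn_subset {U | U ⊆ S ∧ G.IsIndepSet U} fun C hCS hC =>
    ⟨⋃₀ C, ⟨sUnion_subset fun U hU => (hCS hU).1,
      (pairwise_sUnion hC.directedOn).2 fun U hU => (hCS hU).2⟩,
      fun _ => subset_sUnion_of_mem⟩
  refine ⟨M, hM.prop.1, fun hMc => ?_, hM.prop.2⟩
  have hT : (M ∪ ⋃ x ∈ M, G.neighborSet x ∩ S).Countable :=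
    hMc.union (hMc.biUnion fun x hx => hN x (hM.prop.1 hx))
  obtain ⟨y, hyS, hy⟩ := not_subset.1 fun h => hS (hT.mono h)
  have hyM : insert y M ∈ {U | U ⊆ S ∧ G.IsIndepSet U} :=
    ⟨insert_subset hyS hM.prop.1, hM.prop.2.insert fun x hx _ =>
      ⟨fun hyx => hy (Or.inr (mem_biUnion hx ⟨hyx.symm, hyS⟩)),
        fun hxy => hy (Or.inr (mem_biUnion hx ⟨hxy, hyS⟩))⟩⟩
  exact hy (Or.inl (hM.mem_of_prop_insert hyM))

/-- The finite Dushnik–Miller theorem `ω₁ → (ω₁, n)²`, relativized to an uncountable set. -/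
theorem exists_isNClique_or_exists_uncountable_isIndepSet (n : ℕ) {S : Set X}
    (hS : ¬S.Countable) :
    (∃ s : Finset X, ↑s ⊆ S ∧ G.IsNClique n s) ∨ ∃ U ⊆ S, ¬U.Countable ∧ G.IsIndepSet U := by
  classical
  induction n generalizing S with
  | zero => exact Or.inl ⟨∅, by simp, by simp⟩
  | succ n ih =>
    by_cases hN : ∀ x ∈ S, (G.neighborSet x ∩ S).Countable
    · exact Or.inr (G.exists_uncountable_isIndepSet_of_countable_neighborSet hS hN)
    push Not at hN
    obtain ⟨x, hxS, hx⟩ := hN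
    rcases ih hx with ⟨s, hsS, hs⟩ | ⟨U, hUS, hU, hUi⟩
    · refine Or.inl ⟨insert x s, ?_, hs.insert fun y hy => (hsS hy).1⟩
      rw [Finset.coe_insert]
      exact insert_subset hxS (hsS.trans inter_subset_right)
    · exact Or.inr ⟨U, hUS.trans inter_subset_right, hU, hUi⟩

end SimpleGraph

instance : Uncountable Omega1 := by
  rw [← aleph0_lt_mk_iff, mk_toType, Ordinal.card_omega]
  exact aleph0_lt_aleph_one

theorem nonempty_embedding_omega1_of_not_countable {X : Type} {U : Set X}
    (hU : ¬U.Countable) : Nonempty (Omega1 ↪ U) := by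
  rw [← le_def, mk_toType, Ordinal.card_omega, aleph_one_le_iff]
  exact not_le.1 (le_aleph0_iff_set_countable.not.2 hU)

namespace PairwiseDisjointPairs

variable {a b : Omega1 → Omega1}

theorem injective_left (h : PairwiseDisjointPairs a b) : a.Injective := fun ξ η hξη => by
  by_contra hne
  have hmem : a ξ ∈ ({a ξ, b ξ} ∩ {a η, b η} : Set Omega1) := ⟨Or.inl rfl, Or.inl hξη⟩
  rwa [h.2 ξ η hne] at hmem

theorem injective_right (h : PairwiseDisjointPairs a b) : b.Injective := fun ξ η hξη => by
  by_contra hne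
  have hmem : b ξ ∈ ({a ξ, b ξ} ∩ {a η, b η} : Set Omega1) := ⟨Or.inr rfl, Or.inr hξη⟩
  rwa [h.2 ξ η hne] at hmem

theorem comp (h : PairwiseDisjointPairs a b) (f : Omega1 ↪ Omega1) :
    PairwiseDisjointPairs (a ∘ f) (b ∘ f) :=
  ⟨fun ξ => h.1 (f ξ), fun _ _ hne => h.2 _ _ (f.injective.ne hne)⟩

end PairwiseDisjointPairs

section famOf

variable {I J : Type} {c : Omega1 → Omega1 → I × J}

theorem famOf_mono {i : I} {A B : Finset Omega1} (hA : A ∈ famOf c i) (hBA : B ⊆ A) :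
    B ∈ famOf c i :=
  fun α hα β hβ => hA α (hBA hα) β (hBA hβ)

theorem singleton_mem_famOf (i : I) (α : Omega1) : {α} ∈ famOf c i := by
  intro β hβ γ hγ hne
  rw [Finset.mem_singleton] at hβ hγ
  exact absurd (hβ.trans hγ.symm) hne

theorem card_le_one_of_mem_famOf_inter {i0 i1 : I} (h01 : i0 ≠ i1) {A : Finset Omega1}
    (hA : A ∈ famOf c i0 ∩ famOf c i1) : A.card ≤ 1 := by
  by_contra! h
  obtain ⟨α, hα, β, hβ, hne⟩ := Finset.one_lt_card.1 h
  exact h01 ((hA.1 α hα β hβ hne).symm.trans (hA.2 α hα β hβ hne))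

def pairGraph (c : Omega1 → Omega1 → I × J) (i0 i1 : I) (a b : Omega1 → Omega1) :
    SimpleGraph Omega1 :=
  SimpleGraph.fromRel fun ξ η => (c (a ξ) (a η)).1 = i0 ∧ (c (b ξ) (b η)).1 = i1

theorem image_mem_famOf_of_isClique (hsym : ∀ α β, c α β = c β α) {i0 i1 : I}
    {a b : Omega1 → Omega1} {s : Finset Omega1} (hs : (pairGraph c i0 i1 a b).IsClique s) :
    s.image a ∈ famOf c i0 ∧ s.image b ∈ famOf c i1 := by
  have hadj : ∀ ξ ∈ s, ∀ η ∈ s, ξ ≠ η →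
      (c (a ξ) (a η)).1 = i0 ∧ (c (b ξ) (b η)).1 = i1 := fun ξ hξ η hη hne => by
    obtain ⟨-, h | h⟩ := (SimpleGraph.fromRel_adj _ _ _).1 (hs hξ hη hne)
    · exact h
    · rwa [hsym (a ξ), hsym (b ξ)]
  constructor
  · simp only [famOf, Finset.forall_mem_image, Set.mem_ofPred_eq]
    exact fun ξ hξ η hη hne => (hadj ξ hξ η hη (ne_of_apply_ne a hne)).1
  · simp only [famOf, Finset.forall_mem_image, Set.mem_ofPred_eq]
    exact fun ξ hξ η hη hne => (hadj ξ hξ η hη (ne_of_apply_ne b hne)).2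

theorem IsTColoring.not_isIndepSet_pairGraph [Nonempty J] (hT : IsTColoring c) (i0 i1 : I)
    {a b : Omega1 → Omega1} (hab : PairwiseDisjointPairs a b) {U : Set Omega1}
    (hU : ¬U.Countable) : ¬(pairGraph c i0 i1 a b).IsIndepSet U := by
  intro hUi
  obtain ⟨f⟩ := nonempty_embedding_omega1_of_not_countable hU
  let g : Omega1 ↪ Omega1 := f.trans (Function.Embedding.subtype U)
  obtain ⟨j⟩ := ‹Nonempty J›
  obtain ⟨ξ, η, hlt, ha, hb⟩ := hT _ _ (hab.comp g) (i0, j) (i1, j)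
  have hne : g ξ ≠ g η := g.injective.ne hlt.ne
  exact hUi (f ξ).2 (f η).2 hne <| (SimpleGraph.fromRel_adj _ _ _).2
    ⟨hne, Or.inl ⟨congrArg Prod.fst ha, congrArg Prod.fst hb⟩⟩

end famOf

/-- if `c` is a T-coloring then `𝒜_c` and `ℬ_c` are T-families. -/
theorem stmt17 {I J : Type} (i0 i1 : I) (h01 : i0 ≠ i1) (hJ : Nonempty J)
    (c : Omega1 → Omega1 → I × J)
    (hsym : ∀ α β : Omega1, c α β = c β α)
    (hT : IsTColoring c) :
    IsTFamilies (famOf c i0) (famOf c i1) := by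
  refine ⟨fun _ hA _ => famOf_mono hA, fun _ hA _ => famOf_mono hA,
    fun α => ⟨{α}, singleton_mem_famOf i0 α, Finset.mem_singleton_self α⟩,
    fun _ => card_le_one_of_mem_famOf_inter h01, fun a b hab k => ?_⟩
  rcases (pairGraph c i0 i1 a b).exists_isNClique_or_exists_uncountable_isIndepSet k
      (not_countable_univ_iff.2 inferInstance) with ⟨s, -, hs⟩ | ⟨U, -, hU, hUi⟩
  · obtain ⟨ha, hb⟩ := image_mem_famOf_of_isClique hsym hs.isClique
    exact ⟨s, hs.card_eq, ha, hb, hab.injective_left.injOn, hab.injective_right.injOn⟩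
  · exact absurd hUi (hT.not_isIndepSet_pairGraph i0 i1 hab hU)
end
end

section
/- Let X be a nonseparable Banach space with a linearly dense subset Y' ⊆ X such that for every x* ∈ X*, the set {y ∈ Y' : x*(y) ≠ 0} is countable, and assume X ⊆ ℝ^{ω₁} consists of functions with countable support where coordinate evaluations are continuous functionals. Then there exists a transfinite sequence (y_ξ)_{ξ<ω₁} of nonzero vectors in Y' with pairwise disjoint supports. -/
noncomputable section

/-! If every nonzero `y ∈ Y'` met a countable set `S` of coordinates, then `Y' ∖ {0}` would be
covered by the countable sets `{y ∈ Y' | y(α) ≠ 0}`, `α ∈ S`, so `Y'` would be countable and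
`X`, the closed span of `Y'`, separable. Hence such a set can always be avoided, and a transfinite
recursion along `ω₁`, whose initial segments are countable, chooses `y_η` avoiding the countable
union of the supports of the earlier `y_ξ`. -/

open Cardinal Ordinal Set TopologicalSpace

theorem Omega1.countable_Iio (i : Omega1) : (Iio i).Countable := by
  rw [← le_aleph0_iff_set_countable, ← lt_aleph_one_iff]
  simpa using mk_Iio_lt i (by simp [ord_aleph])

theorem separableSpace_of_countable_of_span_dense {R M : Type*} [Semiring R]
    [TopologicalSpace R] [SeparableSpace R] [AddCommMonoid M] [Module R M] [TopologicalSpace M]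
    [ContinuousAdd M] [ContinuousSMul R M] {s : Set M} (hs : s.Countable)
    (hdense : (Submodule.span R s).topologicalClosure = ⊤) : SeparableSpace M := by
  have := hs.isSeparable.span (R := R) |>.closure
  rwa [← Submodule.topologicalClosure_coe, hdense, Submodule.top_coe,
    isSeparable_univ_iff] at this

theorem exists_mem_ne_zero_forall_eq_zero {R M N ι : Type*} [Semiring R] [TopologicalSpace R]
    [SeparableSpace R] [AddCommMonoid M] [Module R M] [TopologicalSpace M] [ContinuousAdd M]
    [ContinuousSMul R M] [Zero N] [Countable ι] (hns : ¬ SeparableSpace M) {s : Set M}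
    (hdense : (Submodule.span R s).topologicalClosure = ⊤) (f : ι → M → N)
    (hf : ∀ i, {y ∈ s | f i y ≠ 0}.Countable) : ∃ y ∈ s, y ≠ 0 ∧ ∀ i, f i y = 0 := by
  by_contra! h
  have hcover : s ⊆ {0} ∪ ⋃ i, {y ∈ s | f i y ≠ 0} := fun y hy ↦ by
    by_cases hy0 : y = 0
    · exact .inl hy0
    · obtain ⟨i, hi⟩ := h y hy hy0
      exact .inr (mem_iUnion.2 ⟨i, hy, hi⟩)
  exact hns <| separableSpace_of_countable_of_span_dense
    (((countable_singleton 0).union (countable_iUnion hf)).mono hcover) hdense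

theorem exists_pairwise_disjoint_of_forall_countable {ι A X : Type*} [LinearOrder ι]
    [WellFoundedLT ι] (hι : ∀ i : ι, (Iio i).Countable) (P : X → Prop) (supp : X → Set A)
    (hsupp : ∀ x, (supp x).Countable)
    (havoid : ∀ S : Set A, S.Countable → ∃ x, P x ∧ Disjoint (supp x) S) :
    ∃ y : ι → X, (∀ i, P (y i)) ∧ Pairwise fun i j ↦ Disjoint (supp (y i)) (supp (y j)) := by
  have hprev (i : ι) (g : ∀ j < i, X) : (⋃ j : Iio i, supp (g j j.2)).Countable :=
    have := (hι i).to_subtype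
    countable_iUnion fun j ↦ hsupp _
  let y : ι → X := wellFounded_lt.fix fun i g ↦ (havoid _ (hprev i g)).choose
  have hy (i : ι) : P (y i) ∧ Disjoint (supp (y i)) (⋃ j : Iio i, supp (y j)) := by
    rw [show y i = _ from wellFounded_lt.fix_eq _ i]
    exact (havoid _ (hprev i fun j _ ↦ y j)).choose_spec
  have hlt {i j : ι} (hij : i < j) : Disjoint (supp (y i)) (supp (y j)) :=
    ((hy j).2.mono_right (subset_iUnion_of_subset ⟨i, hij⟩ subset_rfl)).symm
  refine ⟨y, fun i ↦ (hy i).1, fun i j hij ↦ ?_⟩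
  rcases hij.lt_or_gt with h | h
  exacts [hlt h, (hlt h).symm]

theorem stmt19_general (X : Type) [NormedAddCommGroup X] [NormedSpace ℝ X]
    (T : X →ₗ[ℝ] (Omega1 → ℝ))
    (hTcont : ∀ α : Omega1, Continuous fun v : X => T v α)
    (hTsupp : ∀ v : X, (Function.support (T v)).Countable)
    (hns : ¬ TopologicalSpace.SeparableSpace X)
    (Y' : Set X)
    (hdense : (Submodule.span ℝ Y').topologicalClosure = ⊤)
    (hctble : ∀ f : X →L[ℝ] ℝ, {y ∈ Y' | f y ≠ 0}.Countable) :
    ∃ y : Omega1 → X, (∀ ξ, y ξ ∈ Y') ∧ (∀ ξ, y ξ ≠ 0) ∧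
      ∀ ξ η : Omega1, ξ ≠ η →
        Disjoint (Function.support (T (y ξ))) (Function.support (T (y η))) := by
  let coord (α : Omega1) : X →L[ℝ] ℝ := ⟨(LinearMap.proj α).comp T, hTcont α⟩
  have havoid (S : Set Omega1) (hS : S.Countable) :
      ∃ v, (v ∈ Y' ∧ v ≠ 0) ∧ Disjoint (Function.support (T v)) S := by
    have := hS.to_subtype
    obtain ⟨v, hvY, hv0, hvS⟩ := exists_mem_ne_zero_forall_eq_zero hns hdense
      (fun α : S ↦ coord α) fun α ↦ hctble (coord α)
    exact ⟨v, ⟨hvY, hv0⟩, disjoint_left.2 fun α hα hαS ↦ hα (hvS ⟨α, hαS⟩)⟩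
  obtain ⟨y, hy, hdisj⟩ := exists_pairwise_disjoint_of_forall_countable Omega1.countable_Iio
    (fun v ↦ v ∈ Y' ∧ v ≠ 0) (fun v ↦ Function.support (T v)) hTsupp havoid
  exact ⟨y, fun ξ ↦ (hy ξ).1, fun ξ ↦ (hy ξ).2, hdisj⟩

/-- in a nonseparable Banach space of countably supported functions
on `ω₁` with continuous coordinates, a linearly dense set on which every functional
is countably supported yields `ω₁` many nonzero vectors with pairwise disjoint
supports. -/
theorem stmt19 (X : Type) [NormedAddCommGroup X] [NormedSpace ℝ X]
    [CompleteSpace X]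
    (T : X →ₗ[ℝ] (Omega1 → ℝ)) (hTinj : Function.Injective T)
    (hTcont : ∀ α : Omega1, Continuous fun v : X => T v α)
    (hTsupp : ∀ v : X, (Function.support (T v)).Countable)
    (hns : ¬ TopologicalSpace.SeparableSpace X)
    (Y' : Set X)
    (hdense : (Submodule.span ℝ Y').topologicalClosure = ⊤)
    (hctble : ∀ f : X →L[ℝ] ℝ, {y ∈ Y' | f y ≠ 0}.Countable) :
    ∃ y : Omega1 → X, (∀ ξ, y ξ ∈ Y') ∧ (∀ ξ, y ξ ≠ 0) ∧
      ∀ ξ η : Omega1, ξ ≠ η →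
        Disjoint (Function.support (T (y ξ))) (Function.support (T (y η))) :=
  stmt19_general X T hTcont hTsupp hns Y' hdense hctble
end
end
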